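/- arXiv:2110.08091 — 3 statements merged into one kernel-verified Lean document; each statement's English description precedes it below -/
import Mathlib

section
/- Let ψ : T → T be a semiring automorphism of the tropical semifield T. Then the image ψ(1) of the real number 1 is a positive real number, ψ(−∞) = −∞, and ψ(t) = ψ(1)·t (usual real multiplication) for every real number t; that is, ψ is the ψ(1)-expansive map of T. -/
/-- The tropical semifield `T = ℝ ∪ {-∞}` is modeled as `WithBot ℝ`, whose `max` is
tropical addition `⊕`, whose `+` (with `⊥` absorbing) is tropical multiplication `⊙`,
whose `⊥ = -∞` is the additive neutral element, and whose `(0 : ℝ)` is the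
multiplicative identity.  `IsTropHom ψ` says `ψ` is a semiring homomorphism of `T`. -/
def IsTropHom (ψ : WithBot ℝ → WithBot ℝ) : Prop :=
  (∀ a b : WithBot ℝ, ψ (max a b) = max (ψ a) (ψ b)) ∧
  (∀ a b : WithBot ℝ, ψ (a + b) = ψ a + ψ b) ∧
  ψ ⊥ = ⊥ ∧ ψ ((0 : ℝ) : WithBot ℝ) = ((0 : ℝ) : WithBot ℝ)

/-- Every semiring automorphism `ψ` of the tropical semifield `T` sends the real
number `1` to a positive real `r`, sends `-∞` to `-∞`, and satisfies
`ψ t = r * t` for every real `t`; i.e. `ψ` is the `ψ(1)`-expansive map of `T`. -/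
theorem tropAut_is_expansive (ψ : WithBot ℝ → WithBot ℝ)
    (hhom : IsTropHom ψ) (hbij : Function.Bijective ψ) :
    ψ ⊥ = ⊥ ∧
    ∃ r : ℝ, 0 < r ∧ ψ ((1 : ℝ) : WithBot ℝ) = ((r : ℝ) : WithBot ℝ) ∧
      ∀ t : ℝ, ψ ((t : ℝ) : WithBot ℝ) = ((r * t : ℝ) : WithBot ℝ) := by
  obtain ⟨hmax, hadd, hbot, hzero⟩ := hhom
  refine ⟨hbot, ?_⟩
  have hne : ∀ t : ℝ, ψ (t : WithBot ℝ) ≠ ⊥ := by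
    intro t h
    exact WithBot.coe_ne_bot (hbij.1 (h.trans hbot.symm))
  choose f hf using fun t : ℝ => WithBot.ne_bot_iff_exists.mp (hne t)
  -- hf : ∀ t, (f t : WithBot ℝ) = ψ t
  have fadd : ∀ a b : ℝ, f (a + b) = f a + f b := by
    intro a b
    have h : ((f (a + b) : ℝ) : WithBot ℝ) = ((f a + f b : ℝ) : WithBot ℝ) := by
      rw [hf, WithBot.coe_add, hadd, ← hf, ← hf, ← WithBot.coe_add]
    exact_mod_cast h
  have fmono : Monotone f := by
    intro a b hab
    have h1 : ψ (max (a : WithBot ℝ) b) = max (ψ a) (ψ b) := hmax _ _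
    rw [max_eq_right (by exact_mod_cast hab)] at h1
    have h2 : ((f a : ℝ) : WithBot ℝ) ≤ ((f b : ℝ) : WithBot ℝ) := by
      rw [hf, hf, h1]; exact le_max_left _ _
    exact_mod_cast h2
  have f0 : f 0 = 0 := by
    have : ((f 0 : ℝ) : WithBot ℝ) = ((0 : ℝ) : WithBot ℝ) := by rw [hf, hzero]
    exact_mod_cast this
  set r := f 1 with hr
  have hrpos : 0 < r := by
    rcases lt_or_eq_of_le (f0 ▸ fmono (zero_le_one (α := ℝ))) with h | h
    · exact h
    · exfalso
      have : ψ ((0 : ℝ) : WithBot ℝ) = ψ ((1 : ℝ) : WithBot ℝ) := by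
        rw [← hf, ← hf, f0, ← h]
      have h01 : ((0 : ℝ) : WithBot ℝ) = ((1 : ℝ) : WithBot ℝ) := hbij.1 this
      exact zero_ne_one (α := ℝ) (by exact_mod_cast h01)
  let F : ℝ →+ ℝ := AddMonoidHom.mk' f fadd
  have frat : ∀ q : ℚ, f (q : ℝ) = q * r := by
    intro q
    have := map_ratCast_smul F ℝ ℝ q (1 : ℝ)
    simpa [F, smul_eq_mul] using this
  have flin : ∀ t : ℝ, f t = r * t := by
    intro t
    refine le_antisymm ?_ ?_
    · refine le_of_forall_pos_le_add ?_
      intro ε hε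
      obtain ⟨q, hq1, hq2⟩ := exists_rat_btwn (lt_add_of_pos_right t (div_pos hε hrpos))
      calc f t ≤ f q := fmono hq1.le
        _ = q * r := frat q
        _ ≤ (t + ε / r) * r := by nlinarith
        _ = r * t + ε := by field_simp
    · rw [← sub_nonneg]
      refine le_of_forall_pos_le_add ?_  -- 0 ≤ f t - r*t + ε'
      intro ε hε
      obtain ⟨q, hq1, hq2⟩ := exists_rat_btwn (sub_lt_self t (div_pos hε hrpos))
      have h1 : f q ≤ f t := fmono hq2.le
      rw [frat q] at h1
      nlinarith [mul_lt_mul_of_pos_right hq1 hrpos, div_mul_cancel₀ ε hrpos.ne']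
  refine ⟨r, hrpos, ?_, ?_⟩
  · rw [← hf]
  · intro t
    rw [← hf, flin t]
end

section
/- The group of all semiring automorphisms of the tropical semifield T (under composition) is isomorphic to the multiplicative group of positive real numbers; an isomorphism sends each r > 0 to the r-expansive map of T (the map fixing −∞ and sending each real t to r·t). -/
open Function

theorem AddMonoidHom.eq_zero_of_forall_abs_le {M α : Type*} [AddMonoid M] [AddCommGroup α]
    [LinearOrder α] [IsOrderedAddMonoid α] [Archimedean α] (g : M →+ α) (C : α)
    (hg : ∀ x, |g x| ≤ C) : g = 0 := by
  ext x
  by_contra hx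
  obtain ⟨n, hn⟩ := exists_lt_nsmul (abs_pos.mpr hx) C
  have := hg (n • x)
  rw [map_nsmul, abs_nsmul] at this
  exact this.not_gt hn

theorem AddMonoidHom.apply_eq_map_one_mul_of_monotone (f : ℝ →+ ℝ) (hf : Monotone f) (t : ℝ) :
    f t = f 1 * t := by
  have hint : ∀ n : ℤ, f n = f 1 * n := fun n => by
    simpa [zsmul_eq_mul, mul_comm] using map_zsmul f n (1 : ℝ)
  have hc : 0 ≤ f 1 := by simpa using hf zero_le_one
  have hbound : ∀ s, |f s - f 1 * s| ≤ f 1 := fun s => by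
    have hlo : f 1 * ⌊s⌋ ≤ f s := hint ⌊s⌋ ▸ hf (Int.floor_le s)
    have hhi : f s ≤ f 1 * (⌊s⌋ + 1) := by
      simpa [hint, mul_add] using hf (Int.lt_floor_add_one s).le
    rw [abs_le]
    constructor <;> nlinarith [Int.floor_le s, Int.lt_floor_add_one s]
  have hzero := (f - AddMonoidHom.mulLeft (f 1)).eq_zero_of_forall_abs_le _ hbound
  simpa [sub_eq_zero] using DFunLike.congr_fun hzero t

theorem isTropHom_map_mul {c : ℝ} (hc : 0 ≤ c) : IsTropHom (WithBot.map (c * ·)) :=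
  ⟨fun _ _ => (WithBot.monotone_map_iff.mpr (monotone_mul_left_of_nonneg hc)).map_max,
    fun a b => WithBot.map_add (AddMonoidHom.mulLeft c) a b, rfl, by simp⟩

namespace IsTropHom

variable {ψ : WithBot ℝ → WithBot ℝ}

theorem monotone (h : IsTropHom ψ) : Monotone ψ := fun a b hab => by
  rw [← max_eq_right hab, h.1]
  exact le_max_left _ _

theorem apply_coe_ne_bot (h : IsTropHom ψ) (t : ℝ) : ψ t ≠ ⊥ := fun ht => by
  have hsum := h.2.1 t ↑(-t)
  rw [← WithBot.coe_add, add_neg_cancel, h.2.2.2, ht, WithBot.bot_add] at hsum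
  exact WithBot.coe_ne_bot hsum

theorem exists_nonneg_eq_map_mul (h : IsTropHom ψ) :
    ∃ c : ℝ, 0 ≤ c ∧ ψ = WithBot.map (c * ·) := by
  choose f hf using fun t : ℝ => WithBot.ne_bot_iff_exists.mp (h.apply_coe_ne_bot t)
  let F : ℝ →+ ℝ := AddMonoidHom.mk' f fun a b => WithBot.coe_injective <| by
    rw [WithBot.coe_add, hf, hf, hf, WithBot.coe_add, h.2.1]
  have hF : Monotone F := fun a b hab => WithBot.coe_le_coe.mp <| by
    simpa only [F, AddMonoidHom.mk'_apply, hf] using h.monotone (WithBot.coe_le_coe.mpr hab)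
  refine ⟨f 1, by simpa using F.map_zero ▸ hF zero_le_one, funext fun x => ?_⟩
  induction x using WithBot.recBotCoe with
  | bot => exact h.2.2.1
  | coe t =>
    rw [← hf, WithBot.map_coe]
    exact congrArg _ (F.apply_eq_map_one_mul_of_monotone hF t)

end IsTropHom

noncomputable def tropExpansion : {r : ℝ // 0 < r} →* Equiv.Perm (WithBot ℝ) where
  toFun r := Equiv.optionCongr (Equiv.mulLeft₀ r.1 r.2.ne')
  map_one' := Equiv.ext fun x => show x.map (1 * ·) = x by simp
  map_mul' r s := Equiv.ext fun x =>
    show x.map ((r * s).1 * ·) = (x.map (s.1 * ·)).map (r.1 * ·) by cases x <;> simp [mul_assoc]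

theorem coe_tropExpansion (r : {r : ℝ // 0 < r}) : ⇑(tropExpansion r) = WithBot.map (r.1 * ·) := rfl

theorem tropExpansion_injective : Injective tropExpansion := fun r s hrs => by
  simpa [coe_tropExpansion, Subtype.ext_iff] using congr_arg (· ((1 : ℝ) : WithBot ℝ)) hrs

theorem mem_range_tropExpansion_iff {ψ : Equiv.Perm (WithBot ℝ)} :
    ψ ∈ tropExpansion.range ↔ IsTropHom ψ := by
  constructor
  · rintro ⟨r, rfl⟩
    exact isTropHom_map_mul r.2.le
  · intro h
    obtain ⟨c, hc, hψ⟩ := h.exists_nonneg_eq_map_mul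
    have hc0 : c ≠ 0 := by
      rintro rfl
      exact zero_ne_one (WithBot.coe_injective (ψ.injective (by simp [hψ])))
    exact ⟨⟨c, hc.lt_of_ne' hc0⟩, Equiv.ext (congr_fun hψ.symm)⟩

/-- The semiring automorphisms of the tropical semifield `T` form a group under
composition (a subgroup `G` of the permutation group of `T`), and this group is
isomorphic to the multiplicative group of positive reals, an isomorphism sending
each `r > 0` to the `r`-expansive map of `T` (fixing `-∞`, sending real `t` to `r*t`). -/
theorem tropAut_group_iso_posReal :
    ∃ G : Subgroup (Equiv.Perm (WithBot ℝ)),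
      (∀ ψ : Equiv.Perm (WithBot ℝ), ψ ∈ G ↔ IsTropHom ψ) ∧
      ∃ e : {r : ℝ // 0 < r} ≃* G,
        ∀ (r : {r : ℝ // 0 < r}) (x : WithBot ℝ),
          ((e r : Equiv.Perm (WithBot ℝ)) x) = x.map (fun t : ℝ => r.1 * t) :=
  ⟨tropExpansion.range, fun _ => mem_range_tropExpansion_iff,
    MonoidHom.ofInjective tropExpansion_injective, fun _ _ => rfl⟩
end

section
/- For any semiring automorphism ψ of the tropical semifield T and any real numbers t, t′ with 0 < t < t′ (or more generally any nonzero reals t, t′ with t < t′), the ratios satisfy ψ(t′)/ψ(t) = t′/t; in particular ψ(t)/t is the same positive constant for all nonzero real t. -/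
/-- For a semiring automorphism `ψ` of the tropical semifield `T` and nonzero reals
`t < t'`, the images are reals `s = ψ(t)`, `s' = ψ(t')` with `s'/s = t'/t`; in
particular `ψ(t)/t` is the same positive constant `c` for all nonzero real `t`. -/
theorem tropAut_ratio (ψ : WithBot ℝ → WithBot ℝ)
    (hhom : IsTropHom ψ) (hbij : Function.Bijective ψ) :
    (∀ t t' : ℝ, t ≠ 0 → t' ≠ 0 → t < t' →
      ∃ s s' : ℝ, ψ ((t : ℝ) : WithBot ℝ) = ((s : ℝ) : WithBot ℝ) ∧
        ψ ((t' : ℝ) : WithBot ℝ) = ((s' : ℝ) : WithBot ℝ) ∧ s' / s = t' / t) ∧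
    ∃ c : ℝ, 0 < c ∧ ∀ t : ℝ, t ≠ 0 →
      ∃ s : ℝ, ψ ((t : ℝ) : WithBot ℝ) = ((s : ℝ) : WithBot ℝ) ∧ s / t = c := by
  obtain ⟨hmax, hadd, hbot, hzero⟩ := hhom
  -- ψ maps reals to reals
  have hreal : ∀ x : ℝ, ∃ y : ℝ, ψ ((x : ℝ) : WithBot ℝ) = ((y : ℝ) : WithBot ℝ) := by
    intro x
    cases h : ψ ((x : ℝ) : WithBot ℝ) with
    | bot =>
        exfalso
        have : ((x : ℝ) : WithBot ℝ) = (⊥ : WithBot ℝ) := hbij.1 (h.trans hbot.symm)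
        exact WithBot.coe_ne_bot this
    | coe y => exact ⟨y, rfl⟩
  choose f hf using hreal
  -- f is additive
  have hfadd : ∀ a b : ℝ, f (a + b) = f a + f b := by
    intro a b
    have := hadd ((a : ℝ) : WithBot ℝ) ((b : ℝ) : WithBot ℝ)
    rw [← WithBot.coe_add, hf, hf, hf, ← WithBot.coe_add] at this
    exact_mod_cast this
  have hf0 : f 0 = 0 := by
    have := hf 0
    rw [hzero] at this
    exact_mod_cast this.symm
  -- f is monotone
  have hfmono : Monotone f := by
    intro a b hab
    have h1 : max ((a : ℝ) : WithBot ℝ) ((b : ℝ) : WithBot ℝ) = ((b : ℝ) : WithBot ℝ) :=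
      max_eq_right (by exact_mod_cast hab)
    have := hmax ((a : ℝ) : WithBot ℝ) ((b : ℝ) : WithBot ℝ)
    rw [h1, hf, hf] at this
    have h2 : max (f a) (f b) = f b := by exact_mod_cast this.symm
    exact le_max_left (f a) (f b) |>.trans h2.le
  -- f is injective
  have hfinj : Function.Injective f := by
    intro a b hab
    have : ψ ((a : ℝ) : WithBot ℝ) = ψ ((b : ℝ) : WithBot ℝ) := by
      rw [hf, hf, hab]
    exact_mod_cast hbij.1 this
  -- bundle
  let F : ℝ →+ ℝ := AddMonoidHom.mk' f hfadd
  have hc : 0 < f 1 := by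
    rcases (hfmono (by norm_num : (0:ℝ) ≤ 1)).lt_or_eq with h | h
    · rwa [hf0] at h
    · exact absurd (hfinj h) (by norm_num)
  set c := f 1 with hcdef
  -- f on rationals
  have hq : ∀ q : ℚ, f (q : ℝ) = c * q := by
    intro q
    have := F.toRatLinearMap.map_smul q (1 : ℝ)
    simp only [AddMonoidHom.coe_toRatLinearMap, Rat.smul_def, mul_one] at this
    simpa [F, AddMonoidHom.mk'_apply, mul_comm] using this
  -- f is linear
  have hlin : ∀ x : ℝ, f x = c * x := by
    intro x
    have h1 : f x / c ≤ x := by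
      refine le_of_forall_lt_rat_imp_le fun q hxq => ?_
      have : f x ≤ f q := hfmono hxq.le
      rw [hq] at this
      rw [div_le_iff₀ hc]
      linarith [this]
    have h2 : x ≤ f x / c := by
      refine le_of_forall_rat_lt_imp_le fun q hqx => ?_
      have : f (q : ℝ) ≤ f x := hfmono hqx.le
      rw [hq] at this
      rw [le_div_iff₀ hc]
      linarith [this]
    have : f x / c = x := le_antisymm h1 h2
    field_simp at this
    linarith [this]
  constructor
  · intro t t' ht ht' htt
    refine ⟨f t, f t', hf t, hf t', ?_⟩
    rw [hlin, hlin, mul_div_mul_left _ _ (ne_of_gt hc)]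
  · exact ⟨c, hc, fun t ht => ⟨f t, hf t, by rw [hlin, mul_div_assoc, div_self ht, mul_one]⟩⟩
end
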